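/- Let S be a semigroup satisfying the identity x^p = x^{p+q} for some natural numbers p, q ≥ 1. Then S is an epigroup, and the pseudoinversion satisfies the identity x̄ = x^{(p+1)q−1} for all x ∈ S. -/
import Mathlib


section EpigroupDefs

variable {S : Type*}

/-- `spow x n` is the semigroup power `x^(n+1)` (so `spow x 0 = x`). -/
def spow [Semigroup S] (x : S) : ℕ → S
  | 0 => x
  | n + 1 => spow x n * x

/-- An element of a semigroup is a *group element* if it lies in some subgroup:
a subset closed under multiplication, with a two-sided identity and inverses. -/
def IsGroupElement [Semigroup S] (a : S) : Prop :=
  ∃ (H : Set S) (e : S), a ∈ H ∧ e ∈ H ∧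
    (∀ u ∈ H, ∀ v ∈ H, u * v ∈ H) ∧
    (∀ u ∈ H, e * u = u ∧ u * e = u) ∧
    (∀ u ∈ H, ∃ v ∈ H, u * v = e ∧ v * u = e)

/-- An *epigroup*: a semigroup in which some power of every element is a group
element, equipped with the pseudoinversion `pinv`.  The pseudoinverse `x̄` (the
inverse of `x * x^ω` in the maximal subgroup containing a power of `x`) is
characterized by the listed equational properties: `x x̄ = x̄ x`,
`x̄ x x̄ = x̄`, and `x̄ x^(n+1) = x^n` for some `n`. -/
class Epigroup (S : Type*) extends Semigroup S where
  pinv : S → S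
  pow_isGroupElement : ∀ x : S, ∃ n : ℕ, IsGroupElement (spow x n)
  mul_pinv_comm : ∀ x : S, x * pinv x = pinv x * x
  pinv_mul_mul_pinv : ∀ x : S, pinv x * x * pinv x = pinv x
  pinv_spow : ∀ x : S, ∃ n : ℕ, pinv x * spow x (n + 1) = spow x n

open Epigroup

/-- `x^ω = x * x̄`, the identity element of the maximal subgroup containing a
power of `x`. -/
def eomega [Epigroup S] (x : S) : S := x * pinv x

end EpigroupDefs

open Epigroup
section Aux

variable {S : Type*} [Semigroup S]

private lemma spow_add (x : S) (m n : ℕ) :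
    spow x m * spow x n = spow x (m + n + 1) := by
  induction n with
  | zero => rfl
  | succ n ih =>
      show spow x m * (spow x n * x) = _
      rw [← mul_assoc, ih]
      rfl

private lemma spow_congr_succ (x : S) {m n : ℕ} (hmn : spow x m = spow x n) :
    spow x (m + 1) = spow x (n + 1) := by
  show spow x m * x = spow x n * x
  rw [hmn]

private lemma spow_step (p q : ℕ) (hp : 1 ≤ p)
    (h : ∀ x : S, spow x (p - 1) = spow x (p + q - 1)) (x : S) :
    ∀ m, p - 1 ≤ m → spow x m = spow x (m + q) := by
  intro m hm
  obtain ⟨k, rfl⟩ := Nat.exists_eq_add_of_le hm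
  induction k with
  | zero =>
      have : p + q - 1 = p - 1 + 0 + q := by omega
      simpa [this] using h x
  | succ k ih =>
      have h3 : spow x (p - 1 + k + 1) = spow x (p - 1 + k + q + 1) :=
        spow_congr_succ x (ih (by omega))
      have h1 : p - 1 + (k + 1) = p - 1 + k + 1 := by omega
      rw [h1, show p - 1 + k + 1 + q = p - 1 + k + q + 1 from by omega]
      exact h3

private lemma spow_steps (p q : ℕ) (hp : 1 ≤ p)
    (h : ∀ x : S, spow x (p - 1) = spow x (p + q - 1)) (x : S) :
    ∀ k m, p - 1 ≤ m → spow x m = spow x (m + k * q) := by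
  intro k
  induction k with
  | zero => intro m hm; simp
  | succ k ih =>
      intro m hm
      have h1 := ih m hm
      have h2 := spow_step p q hp h x (m + k * q) (by omega)
      rw [h1, h2]
      ring_nf

end Aux
open Epigroup
/-- If a semigroup satisfies `x^p = x^(p+q)` (`p, q ≥ 1`) then it is an
epigroup whose pseudoinversion satisfies `x̄ = x^((p+1)q - 1)`. -/
theorem stmt9 {S : Type*} [inst : Semigroup S] (p q : ℕ) (hp : 1 ≤ p) (hq : 1 ≤ q)
    (h : ∀ x : S, spow x (p - 1) = spow x (p + q - 1)) :
    ∃ E : Epigroup S, E.toSemigroup = inst ∧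
      ∀ x : S, Epigroup.pinv (self := E) x = spow x ((p + 1) * q - 2) := by
  have hpq2 : 2 ≤ (p + 1) * q := le_trans (by omega) (Nat.mul_le_mul (le_refl (p+1)) hq)
  have hple : p + 1 ≤ (p + 1) * q := Nat.le_mul_of_pos_right (p+1) hq
  have hpqp : p ≤ p * q := Nat.le_mul_of_pos_right p hq
  set A : ℕ := (p + 1) * q - 2 with hA
  have hA2 : A + 2 = (p + 1) * q := by omega
  have hAp : p - 1 ≤ A := by omega
  refine ⟨{ toSemigroup := inst
            pinv := fun x => spow x A
            pow_isGroupElement := ?_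
            mul_pinv_comm := ?_
            pinv_mul_mul_pinv := ?_
            pinv_spow := ?_ }, rfl, fun x => rfl⟩
  · -- pow_isGroupElement
    intro x
    refine ⟨p - 1, {y | ∃ m, p - 1 ≤ m ∧ y = spow x m}, spow x (p * q - 1),
      ⟨p - 1, le_refl _, rfl⟩, ⟨p * q - 1, by omega, rfl⟩, ?_, ?_, ?_⟩
    · rintro u ⟨m, hm, rfl⟩ v ⟨n, hn, rfl⟩
      exact ⟨m + n + 1, by omega, spow_add x m n⟩
    · rintro u ⟨m, hm, rfl⟩
      have hst := spow_steps p q hp h x p m hm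
      constructor
      · rw [spow_add]
        conv_rhs => rw [hst]
        congr 1
        omega
      · rw [spow_add]
        conv_rhs => rw [hst]
        congr 1
        omega
    · rintro u ⟨m, hm, rfl⟩
      have hst := spow_steps p q hp h x (m + 1) (p * q - 1) (by omega)
      have hmq : (m + 1) * (q - 1) + (m + 1) = (m + 1) * q := by
        rw [← Nat.mul_succ]
        congr 1
        omega
      refine ⟨spow x ((p * q - 1) + (m + 1) * (q - 1)), ⟨_, by omega, rfl⟩, ?_, ?_⟩
      · rw [spow_add]
        conv_rhs => rw [hst]
        congr 1
        omega
      · rw [spow_add]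
        conv_rhs => rw [hst]
        congr 1
        omega
  · -- mul_pinv_comm
    intro x
    show spow x 0 * spow x A = spow x A * spow x 0
    rw [spow_add, spow_add]
    congr 1
    omega
  · -- pinv_mul_mul_pinv
    intro x
    show spow x A * spow x 0 * spow x A = spow x A
    rw [spow_add, spow_add]
    have hst := spow_steps p q hp h x (p + 1) A hAp
    rw [← hA2] at hst
    conv_rhs => rw [hst]
    congr 1
    omega
  · -- pinv_spow
    intro x
    refine ⟨p - 1, ?_⟩
    rw [spow_add]
    have hst := spow_steps p q hp h x (p + 1) (p - 1) (le_refl _)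
    rw [← hA2] at hst
    conv_rhs => rw [hst]
    congr 1
    omega
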